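/- In a P-transitive graph, if a vertex x reaches a vertex y in n steps for any n ≥ 1, then x reaches y in at most 3 steps. -/

import Mathlib

def PathLen {V : Type*} (R : V → V → Prop) : ℕ → V → V → Prop
  | 0, x, y => x = y
  | n+1, x, y => ∃ z, R x z ∧ PathLen R n z y

def Reaches {V : Type*} (R : V → V → Prop) (x y : V) : Prop :=
  ∃ n, 1 ≤ n ∧ PathLen R n x y

def PTrans {V : Type*} (P : V → Bool) (R : V → V → Prop) : Prop :=
  ∀ x y, P x = P y → Reaches R x y → R x y

def PTC {V : Type*} (P : V → Bool) (R : V → V → Prop) (x y : V) : Prop :=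
  R x y ∨ (P x = P y ∧ Reaches R x y)

/-!
Along a path `x = z₀ → z₁ → z₂ → z₃ → z₄ → ⋯ → y` of length at least four, two of the three
vertices `x, z₂, z₄` share a colour, and P-transitivity replaces the subpath between them by a
single edge. This strictly shortens the path, so iterating leaves a path of length at most three.
-/

section PathLen

variable {V : Type*} {R : V → V → Prop}

theorem pathLen_one {x y : V} : PathLen R 1 x y ↔ R x y := by
  simp [PathLen]

theorem pathLen_add {m n : ℕ} {x z : V} :
    PathLen R (m + n) x z ↔ ∃ y, PathLen R m x y ∧ PathLen R n y z := by
  induction m generalizing x with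
  | zero => simp [PathLen]
  | succ m ih =>
    rw [Nat.add_right_comm]
    simp only [PathLen, ih]
    grind

end PathLen

theorem Bool.eq_or_eq_or_eq (a b c : Bool) : a = b ∨ b = c ∨ a = c := by
  decide +revert

theorem PTrans.rel_of_pathLen {V : Type*} {P : V → Bool} {R : V → V → Prop} (h : PTrans P R)
    {n : ℕ} {x y : V} (hxy : P x = P y) (hn : 1 ≤ n) (hp : PathLen R n x y) : R x y :=
  h x y hxy ⟨n, hn, hp⟩

theorem PTrans.exists_shorter_pathLen {V : Type*} {P : V → Bool} {R : V → V → Prop}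
    (h : PTrans P R) {n : ℕ} {x y : V} (hp : PathLen R (2 + (2 + n)) x y) :
    ∃ m, 1 ≤ m ∧ m < 2 + (2 + n) ∧ PathLen R m x y := by
  obtain ⟨z₂, hxz₂, hz₂y⟩ := pathLen_add.mp hp
  obtain ⟨z₄, hz₂z₄, hz₄y⟩ := pathLen_add.mp hz₂y
  rcases Bool.eq_or_eq_or_eq (P x) (P z₂) (P z₄) with hc | hc | hc
  · have hx : R x z₂ := h.rel_of_pathLen hc (by norm_num) hxz₂
    exact ⟨1 + (2 + n), by omega, by omega, pathLen_add.mpr ⟨z₂, pathLen_one.mpr hx, hz₂y⟩⟩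
  · have hz₂ : R z₂ z₄ := h.rel_of_pathLen hc (by norm_num) hz₂z₄
    exact ⟨2 + (1 + n), by omega, by omega,
      pathLen_add.mpr ⟨z₂, hxz₂, pathLen_add.mpr ⟨z₄, pathLen_one.mpr hz₂, hz₄y⟩⟩⟩
  · have hx : R x z₄ := h.rel_of_pathLen hc (by norm_num) (pathLen_add.mpr ⟨z₂, hxz₂, hz₂z₄⟩)
    exact ⟨1 + n, by omega, by omega, pathLen_add.mpr ⟨z₄, pathLen_one.mpr hx, hz₄y⟩⟩

theorem ptransitive_reach_in_three {V : Type*} (R : V → V → Prop) (P : V → Bool)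
    (h : PTrans P R) :
    ∀ x y : V, ∀ n, 1 ≤ n → PathLen R n x y → ∃ m, 1 ≤ m ∧ m ≤ 3 ∧ PathLen R m x y := by
  intro x y n
  induction n using Nat.strong_induction_on with
  | _ n ih =>
    intro hn hp
    by_cases h3 : n ≤ 3
    · exact ⟨n, hn, h3, hp⟩
    obtain ⟨k, rfl⟩ : ∃ k, n = 2 + (2 + k) := ⟨n - 4, by omega⟩
    obtain ⟨m, hm, hlt, hpm⟩ := h.exists_shorter_pathLen hp
    exact ih m hlt hm hpm
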